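/- Let C ⊆ {0,1}^n be a code and i ∈ [n]. The canonical form of the neural ideal of the quotient code C/{i} consists exactly of those elements of the canonical form of J_C that are divisible by neither x_i nor (1−x_i). -/

import Mathlib

open MvPolynomial

/-- The pseudomonomial with data `(σ, τ)`. -/
noncomputable def psm {V : Type*} (σ τ : Finset V) : MvPolynomial V (ZMod 2) :=
  (∏ i ∈ σ, X i) * ∏ j ∈ τ, (1 - X j)

/-- A pseudomonomial: a product `∏_{i∈σ} x_i ∏_{j∈τ}(1 - x_j)` with `σ, τ` disjoint. -/
def IsPseudomonomial {V : Type*} (f : MvPolynomial V (ZMod 2)) : Prop :=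
  ∃ σ τ : Finset V, Disjoint σ τ ∧ f = psm σ τ

/-- `f` is a minimal pseudomonomial of `I` (an element of the canonical form of `I`). -/
def IsMinimalPseudomonomial {V : Type*} (I : Ideal (MvPolynomial V (ZMod 2)))
    (f : MvPolynomial V (ZMod 2)) : Prop :=
  IsPseudomonomial f ∧ f ∈ I ∧
    ∀ g : MvPolynomial V (ZMod 2), g ∣ f → ¬ f ∣ g → g ∉ I

/-- The indicator pseudomonomial of a word `c`. -/
noncomputable def indic {V : Type*} [Fintype V] (c : V → ZMod 2) :
    MvPolynomial V (ZMod 2) :=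
  ∏ i : V, (if c i = 1 then X i else 1 - X i)

/-- The neural ideal of a code `C`. -/
noncomputable def neuralIdeal {V : Type*} [Fintype V] (C : Set (V → ZMod 2)) :
    Ideal (MvPolynomial V (ZMod 2)) :=
  Ideal.span {f | ∃ c ∉ C, f = indic c}

/-!
A pseudomonomial lies in a neural ideal iff it vanishes on the code, and, since `x_j` and
`1 - x_j` are prime and `1` is the only unit of `𝔽₂[x]`, its divisors are exactly the
pseudomonomials `psm σ' τ'` with `σ' ⊆ σ`, `τ' ⊆ τ`. So minimality of `psm σ τ` only involves
these. Renaming variables along `{j // j ≠ i} ↪ [n]` preserves divisibility, turns vanishing on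
`C/{i}` into vanishing on `C`, and its image among pseudomonomials is exactly those divisible by
neither `x_i` nor `1 - x_i`; hence it matches the two canonical forms.
-/

namespace MvPolynomial

variable {V W R : Type*} [CommRing R]

theorem eq_one_of_isUnit [IsReduced R] [Subsingleton Rˣ] {p : MvPolynomial V R} (hp : IsUnit p) :
    p = 1 := by
  obtain ⟨r, hr, rfl⟩ := isUnit_iff_eq_C_of_isReduced.1 hp
  rw [hr.eq_one, C_1]

/-- `X j ↦ 1 - X j` is an involutive automorphism carrying the prime `X j` to `1 - X j`. -/
theorem prime_one_sub_X [IsDomain R] (j : V) : Prime (1 - X j : MvPolynomial V R) := by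
  classical
  let s : MvPolynomial V R →ₐ[R] MvPolynomial V R := aeval (Function.update X j (1 - X j))
  have hs : s.comp s = AlgHom.id R _ := by
    ext k
    by_cases hk : k = j
    · subst hk
      simp [s]
    · simp [s, Function.update_of_ne hk]
  have hsX : AlgEquiv.ofAlgHom s s hs hs (X j) = 1 - X j := by simp [s]
  rw [← hsX, MulEquiv.prime_iff]
  exact X_prime

theorem rename_dvd_rename_iff {f : W → V} (hf : f.Injective) {p q : MvPolynomial W R} :
    rename f p ∣ rename f q ↔ p ∣ q :=
  ⟨fun h => by simpa only [killCompl_rename_app] using map_dvd (killCompl hf) h, map_dvd _⟩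

/-- Substituting `r` for `X i` fixes `rename f p` and kills `X i - C r`. -/
theorem eq_zero_of_X_sub_C_dvd_rename [DecidableEq V] {f : W → V} (hf : f.Injective) {i : V}
    (hi : ∀ w, f w ≠ i) (r : R) {p : MvPolynomial W R} (h : X i - C r ∣ rename f p) : p = 0 := by
  let φ : MvPolynomial V R →ₐ[R] MvPolynomial V R := aeval (Function.update X i (C r))
  have hφ : φ.comp (rename f) = rename f := by
    ext w
    simp [φ, Function.update_of_ne (hi w)]
  have h0 := map_dvd φ h
  rw [show φ (X i - C r) = 0 by simp [φ], ← AlgHom.comp_apply, hφ, zero_dvd_iff] at h0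
  exact rename_injective f hf (by rw [h0, map_zero])

end MvPolynomial

section Divisibility

variable {M ι : Type*} [CommMonoidWithZero M] [IsCancelMulZero M]

theorem dvd_or_exists_eq_mul_of_dvd_prime_mul {p g m : M} (hp : Prime p) (h : g ∣ p * m) :
    g ∣ m ∨ ∃ g', g' ∣ m ∧ g = p * g' := by
  by_cases hpg : p ∣ g
  · obtain ⟨g', rfl⟩ := hpg
    exact Or.inr ⟨g', (mul_dvd_mul_iff_left hp.ne_zero).1 h, rfl⟩
  · obtain ⟨q, hq⟩ := h
    obtain ⟨q', rfl⟩ := (hp.dvd_mul.1 ⟨m, hq.symm⟩).resolve_left hpg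
    refine Or.inl ⟨q', mul_left_cancel₀ hp.ne_zero ?_⟩
    rw [hq]
    exact mul_left_comm _ _ _

theorem exists_subset_eq_prod_mul_of_dvd {s : Finset ι} {p : ι → M} (hp : ∀ k ∈ s, Prime (p k))
    {g m : M} (h : g ∣ (∏ k ∈ s, p k) * m) :
    ∃ t ⊆ s, ∃ g', g' ∣ m ∧ g = (∏ k ∈ t, p k) * g' := by
  classical
  induction s using Finset.induction_on generalizing g with
  | empty => exact ⟨∅, subset_rfl, g, by simpa using h, by simp⟩
  | insert a s ha ih =>
    rw [Finset.prod_insert ha, mul_assoc] at h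
    have hs : ∀ k ∈ s, Prime (p k) := fun k hk => hp k (Finset.mem_insert_of_mem hk)
    rcases dvd_or_exists_eq_mul_of_dvd_prime_mul (hp a (Finset.mem_insert_self a s)) h with
      hg | ⟨g₀, hg₀, rfl⟩
    · obtain ⟨t, ht, g', hg', rfl⟩ := ih hs hg
      exact ⟨t, ht.trans (Finset.subset_insert a s), g', hg', rfl⟩
    · obtain ⟨t, ht, g', hg', rfl⟩ := ih hs hg₀
      have hat : a ∉ t := fun hat => ha (ht hat)
      refine ⟨insert a t, Finset.insert_subset_insert a ht, g', hg', ?_⟩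
      rw [Finset.prod_insert hat, mul_assoc]

end Divisibility

section Pseudomonomial

variable {V W : Type*}

theorem psm_ne_zero (σ τ : Finset V) : psm σ τ ≠ 0 :=
  mul_ne_zero (Finset.prod_ne_zero_iff.2 fun k _ => X_ne_zero k)
    (Finset.prod_ne_zero_iff.2 fun k _ => (prime_one_sub_X k).ne_zero)

theorem rename_psm (f : W ↪ V) (σ τ : Finset W) :
    rename f (psm σ τ) = psm (σ.map f) (τ.map f) := by
  simp [psm, Finset.prod_map]

theorem X_dvd_psm {k : V} {σ : Finset V} (hk : k ∈ σ) (τ : Finset V) : X k ∣ psm σ τ :=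
  (Finset.dvd_prod_of_mem X hk).mul_right _

theorem one_sub_X_dvd_psm {k : V} (σ : Finset V) {τ : Finset V} (hk : k ∈ τ) :
    1 - X k ∣ psm σ τ :=
  (Finset.dvd_prod_of_mem (fun j => 1 - X j) hk).mul_left _

theorem psm_insert_left [DecidableEq V] {k : V} {σ : Finset V} (hk : k ∉ σ) (τ : Finset V) :
    psm (insert k σ) τ = X k * psm σ τ := by
  rw [psm, psm, Finset.prod_insert hk, mul_assoc]

theorem psm_insert_right [DecidableEq V] {k : V} (σ : Finset V) {τ : Finset V} (hk : k ∉ τ) :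
    psm σ (insert k τ) = (1 - X k) * psm σ τ := by
  rw [psm, psm, Finset.prod_insert hk, mul_left_comm]

theorem dvd_psm_iff {g : MvPolynomial V (ZMod 2)} {σ τ : Finset V} :
    g ∣ psm σ τ ↔ ∃ σ' ⊆ σ, ∃ τ' ⊆ τ, g = psm σ' τ' := by
  refine ⟨fun h => ?_, ?_⟩
  · obtain ⟨σ', hσ', g', hg', rfl⟩ := exists_subset_eq_prod_mul_of_dvd (fun k _ => X_prime) h
    obtain ⟨τ', hτ', g'', hg'', rfl⟩ :=
      exists_subset_eq_prod_mul_of_dvd (fun k _ => prime_one_sub_X k) (m := 1) (by simpa using hg')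
    rw [eq_one_of_isUnit (isUnit_of_dvd_one hg''), mul_one]
    exact ⟨σ', hσ', τ', hτ', rfl⟩
  · rintro ⟨σ', hσ', τ', hτ', rfl⟩
    exact mul_dvd_mul (Finset.prod_dvd_prod_of_subset _ _ _ hσ')
      (Finset.prod_dvd_prod_of_subset _ _ _ hτ')

theorem isMinimalPseudomonomial_psm_iff {I : Ideal (MvPolynomial V (ZMod 2))} {σ τ : Finset V}
    (hd : Disjoint σ τ) :
    IsMinimalPseudomonomial I (psm σ τ) ↔
      psm σ τ ∈ I ∧ ∀ σ' ⊆ σ, ∀ τ' ⊆ τ, ¬ psm σ τ ∣ psm σ' τ' → psm σ' τ' ∉ I := by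
  constructor
  · rintro ⟨-, hI, hmin⟩
    exact ⟨hI, fun σ' hσ' τ' hτ' => hmin _ (dvd_psm_iff.2 ⟨σ', hσ', τ', hτ', rfl⟩)⟩
  · rintro ⟨hI, hmin⟩
    refine ⟨⟨σ, τ, hd, rfl⟩, hI, fun g hg => ?_⟩
    obtain ⟨σ', hσ', τ', hτ', rfl⟩ := dvd_psm_iff.1 hg
    exact hmin σ' hσ' τ' hτ'

theorem isMinimalPseudomonomial_psm_map_iff (f : W ↪ V) {I' : Ideal (MvPolynomial W (ZMod 2))}
    {I : Ideal (MvPolynomial V (ZMod 2))} {σ τ : Finset W} (hd : Disjoint σ τ)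
    (hmem : ∀ σ' ⊆ σ, ∀ τ' ⊆ τ, psm σ' τ' ∈ I' ↔ psm (σ'.map f) (τ'.map f) ∈ I) :
    IsMinimalPseudomonomial I' (psm σ τ) ↔ IsMinimalPseudomonomial I (psm (σ.map f) (τ.map f)) := by
  have hdvd (σ' τ' : Finset W) :
      psm σ τ ∣ psm σ' τ' ↔ psm (σ.map f) (τ.map f) ∣ psm (σ'.map f) (τ'.map f) := by
    rw [← rename_psm, ← rename_psm, rename_dvd_rename_iff f.injective]
  rw [isMinimalPseudomonomial_psm_iff hd, isMinimalPseudomonomial_psm_iff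
    ((Finset.disjoint_map f).2 hd), hmem σ subset_rfl τ subset_rfl]
  refine and_congr_right' ⟨fun h σ' hσ' τ' hτ' => ?_, fun h σ' hσ' τ' hτ' => ?_⟩
  · obtain ⟨σ₀, hσ₀, rfl⟩ := Finset.subset_map_iff.1 hσ'
    obtain ⟨τ₀, hτ₀, rfl⟩ := Finset.subset_map_iff.1 hτ'
    rw [← hdvd, ← hmem σ₀ hσ₀ τ₀ hτ₀]
    exact h σ₀ hσ₀ τ₀ hτ₀
  · rw [hdvd, hmem σ' hσ' τ' hτ']
    exact h _ (Finset.map_subset_map.2 hσ') _ (Finset.map_subset_map.2 hτ')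

end Pseudomonomial

section NeuralIdeal

variable {V W : Type*} [Fintype V]

theorem indic_eq_psm [DecidableEq V] (c : V → ZMod 2) :
    indic c = psm {k | c k = 1} {k | ¬ c k = 1} :=
  Finset.prod_ite _ _

theorem eval_indic_self (c : V → ZMod 2) : eval c (indic c) = 1 := by
  have key : ∀ a : ZMod 2, (if a = 1 then a else 1 - a) = 1 := by decide
  simp [indic, map_prod, apply_ite, key]

theorem eval_indic_of_ne {c c' : V → ZMod 2} (h : c ≠ c') : eval c (indic c') = 0 := by
  obtain ⟨k, hk⟩ := Function.ne_iff.1 h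
  have key : ∀ a b : ZMod 2, a ≠ b → (if b = 1 then a else 1 - a) = 0 := by decide
  rw [indic, map_prod]
  refine Finset.prod_eq_zero (Finset.mem_univ k) ?_
  simpa [apply_ite] using key _ _ hk

theorem eval_eq_zero_of_mem_neuralIdeal {C : Set (V → ZMod 2)} {p : MvPolynomial V (ZMod 2)}
    (hp : p ∈ neuralIdeal C) {c : V → ZMod 2} (hc : c ∈ C) : eval c p = 0 := by
  refine (Ideal.span_le (I := RingHom.ker (eval c))).2 ?_ hp
  rintro _ ⟨c', hc', rfl⟩
  exact eval_indic_of_ne (fun h => hc' (h ▸ hc))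

/-- Splitting `psm σ τ = x_k psm σ τ + (1 - x_k) psm σ τ` along the free coordinates `k` reduces
to `σ ∪ τ = univ`, where `psm σ τ` is the indicator of a word on which it is `1`, hence of a
non-codeword. -/
theorem psm_mem_neuralIdeal_of_forall_eval_eq_zero {C : Set (V → ZMod 2)} {σ τ : Finset V}
    (hd : Disjoint σ τ) (hv : ∀ c ∈ C, eval c (psm σ τ) = 0) : psm σ τ ∈ neuralIdeal C := by
  classical
  suffices ∀ R : Finset V, ∀ σ τ : Finset V, Disjoint σ τ → (∀ k ∉ R, k ∈ σ ∨ k ∈ τ) →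
      (∀ c ∈ C, eval c (psm σ τ) = 0) → psm σ τ ∈ neuralIdeal C from
    this Finset.univ σ τ hd (by simp) hv
  intro R
  induction R using Finset.induction_on with
  | empty =>
    intro σ τ hd hcover hv
    let c : V → ZMod 2 := fun k => if k ∈ σ then 1 else 0
    have hc : indic c = psm σ τ := by
      rw [indic_eq_psm]
      congr 1 <;> ext k
      · by_cases hk : k ∈ σ <;> simp [c, hk]
      · rcases hcover k (Finset.notMem_empty k) with hk | hk
        · simp [c, hk, Finset.disjoint_left.1 hd hk]
        · simp [c, hk, Finset.disjoint_right.1 hd hk]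
    refine hc ▸ Ideal.subset_span ⟨c, fun hcC => ?_, rfl⟩
    simpa [← hc, eval_indic_self] using hv c hcC
  | insert k R hk ih =>
    intro σ τ hd hcover hv
    by_cases hkστ : k ∈ σ ∨ k ∈ τ
    · refine ih σ τ hd (fun x hx => ?_) hv
      by_cases hxk : x = k
      · exact hxk ▸ hkστ
      · exact hcover x (by simp [hxk, hx])
    push Not at hkστ
    obtain ⟨hkσ, hkτ⟩ := hkστ
    have hcover' (x : V) (hx : x ∉ R) : x = k ∨ x ∈ σ ∨ x ∈ τ := by
      by_cases hxk : x = k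
      · exact Or.inl hxk
      · exact Or.inr (hcover x (by simp [hxk, hx]))
    rw [show psm σ τ = psm (insert k σ) τ + psm σ (insert k τ) by
      rw [psm_insert_left hkσ, psm_insert_right σ hkτ]; ring]
    refine add_mem (ih _ _ ?_ ?_ ?_) (ih _ _ ?_ ?_ ?_)
    · exact Finset.disjoint_insert_left.2 ⟨hkτ, hd⟩
    · intro x hx
      rcases hcover' x hx with rfl | h | h <;> simp [*]
    · intro c hc
      rw [psm_insert_left hkσ, map_mul, hv c hc, mul_zero]
    · exact Finset.disjoint_insert_right.2 ⟨hkσ, hd⟩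
    · intro x hx
      rcases hcover' x hx with rfl | h | h <;> simp [*]
    · intro c hc
      rw [psm_insert_right σ hkτ, map_mul, hv c hc, mul_zero]

theorem psm_mem_neuralIdeal_iff {C : Set (V → ZMod 2)} {σ τ : Finset V} (hd : Disjoint σ τ) :
    psm σ τ ∈ neuralIdeal C ↔ ∀ c ∈ C, eval c (psm σ τ) = 0 :=
  ⟨fun h _ hc => eval_eq_zero_of_mem_neuralIdeal h hc,
    psm_mem_neuralIdeal_of_forall_eval_eq_zero hd⟩

theorem psm_mem_neuralIdeal_restrict_iff [Fintype W] (f : W ↪ V) {C : Set (V → ZMod 2)}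
    {σ τ : Finset W} (hd : Disjoint σ τ) :
    psm σ τ ∈ neuralIdeal ((fun c w => c (f w)) '' C) ↔
      psm (σ.map f) (τ.map f) ∈ neuralIdeal C := by
  rw [psm_mem_neuralIdeal_iff hd, psm_mem_neuralIdeal_iff ((Finset.disjoint_map f).2 hd),
    Set.forall_mem_image, ← rename_psm]
  simp only [eval_rename, Function.comp_def]

end NeuralIdeal

/-- The canonical form of the neural ideal of the quotient code `C/{i}` consists
exactly of the elements of the canonical form of `J_C` divisible by neither `x_i`
nor `1 - x_i`. -/
theorem canonicalForm_quotient_code {n : ℕ} (C : Set (Fin n → ZMod 2)) (i : Fin n) :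
    (rename (Subtype.val : {j : Fin n // j ≠ i} → Fin n)) ''
        {g | IsMinimalPseudomonomial
          (neuralIdeal ((fun (c : Fin n → ZMod 2) (j : {j : Fin n // j ≠ i}) => c j.1) '' C))
          g} =
      {f | IsMinimalPseudomonomial (neuralIdeal C) f ∧
        ¬ (X i ∣ f) ∧ ¬ ((1 - X i) ∣ f)} := by
  let e : {j : Fin n // j ≠ i} ↪ Fin n := Function.Embedding.subtype _
  have hmin (σ τ) (hd : Disjoint σ τ) := isMinimalPseudomonomial_psm_map_iff e hd
    fun σ' hσ' τ' hτ' => psm_mem_neuralIdeal_restrict_iff e (C := C) (hd.mono hσ' hτ')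
  ext g
  constructor
  · rintro ⟨g, hg, rfl⟩
    obtain ⟨σ, τ, hd, rfl⟩ := hg.1
    refine ⟨rename_psm e σ τ ▸ (hmin σ τ hd).1 hg, fun h => psm_ne_zero σ τ ?_,
      fun h => psm_ne_zero σ τ ?_⟩
    · exact eq_zero_of_X_sub_C_dvd_rename Subtype.val_injective (fun j => j.2) 0
        (by simpa using h)
    · exact eq_zero_of_X_sub_C_dvd_rename Subtype.val_injective (fun j => j.2) 1
        (by simpa using h.neg_left)
  · rintro ⟨hg, hXi, hXi'⟩
    obtain ⟨σ, τ, hd, rfl⟩ := hg.1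
    have hσ : ∀ k ∈ σ, k ≠ i := by rintro k hk rfl; exact hXi (X_dvd_psm hk τ)
    have hτ : ∀ k ∈ τ, k ≠ i := by rintro k hk rfl; exact hXi' (one_sub_X_dvd_psm σ hk)
    rw [← Finset.subtype_map_of_mem hσ, ← Finset.subtype_map_of_mem hτ] at hg hd ⊢
    exact ⟨_, (hmin _ _ ((Finset.disjoint_map e).1 hd)).2 hg, rename_psm e _ _⟩
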